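/- arXiv:math/0508585 — 3 statements merged into one kernel-verified Lean document; each statement's English description precedes it below -/
import Mathlib

section
/- For a rate-1 Yule process started from one individual, conditioned on Y_t ≥ 2, the death time s of the most recent common ancestor of a uniformly sampled pair of individuals at time t has distribution function Q_0^{(t)}(s ≤ u) = [1 - 2u e^{-u} - e^{-2u} + e^{-t}(2u - 3 + 4e^{-u} - e^{-2u})] / [(1 - e^{-t})(1 - e^{-u})^2] for 0 < u < t. -/
/-!
Summing the joint density over `j` (a negative binomial series in `1 - e^{-(t-v)}`) and then
over `i` (tails of the series of `-log (1 - y)` at `y = 1 - e^{-v}`) gives the density `g` of `s`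
on `{Y_t ≥ 2}`, so that `P(Y_t ≥ 2, s ≤ u) = ∫₀ᵘ g` by monotone convergence. The function
`G(v) = [1 - 2v e^{-v} - e^{-2v} + e^{-t}(2v - 3 + 4e^{-v} - e^{-2v})] / (1 - e^{-v})²` is an
antiderivative of `g` on `(0, ∞)` and tends to `0` at `0⁺`, because
`G(v) = y + 2(e^{-t} - 1 + y) (-log (1 - y) - y - y²/2) / y²`. Conditioning on `{Y_t ≥ 2}` divides
by `P(Y_t ≥ 2) = 1 - e^{-t}`.
-/

open MeasureTheory ProbabilityTheory Real

/-- The joint density of (coalescence time, population size just after coalescence,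
population size at time `t`) for a sampled pair from a rate-1 Yule process. -/
noncomputable def yuleJointDensity (t : ℝ) (i j : ℕ) (v : ℝ) : ℝ :=
  (Nat.choose (j - 2) (i - 2) : ℝ) * (2 * ((j : ℝ) + 1) / ((i : ℝ) * ((i : ℝ) + 1))) *
    Real.exp (-(t - v) * (i : ℝ)) * (1 - Real.exp (-(t - v))) ^ (j - i) *
    Real.exp (-v) * (1 - Real.exp (-v)) ^ (i - 2)

open Filter Topology Set

lemma hasSum_choose_mul_add_three_mul_geometric {𝕜 : Type*} [NormedField 𝕜] [CompleteSpace 𝕜]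
    (m : ℕ) {x : 𝕜} (hx : ‖x‖ < 1) :
    HasSum (fun k : ℕ => ((k + m).choose m : 𝕜) * (m + k + 3) * x ^ k)
      ((m + 1) * (1 / (1 - x) ^ (m + 2)) + 2 * (1 / (1 - x) ^ (m + 1))) := by
  have hterm : ∀ k : ℕ, ((k + m).choose m : 𝕜) * (m + k + 3) * x ^ k =
      (m + 1) * ((k + (m + 1)).choose (m + 1) * x ^ k) + 2 * ((k + m).choose m * x ^ k) := by
    intro k
    have h := congrArg (Nat.cast (R := 𝕜)) (Nat.add_one_mul_choose_eq (k + m) m)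
    rw [show k + (m + 1) = k + m + 1 by omega]
    push_cast at h ⊢
    linear_combination x ^ k * h
  simp_rw [hterm]
  exact ((hasSum_choose_mul_geometric_of_norm_lt_one (m + 1) hx).mul_left _).add
    ((hasSum_choose_mul_geometric_of_norm_lt_one m hx).mul_left 2)

lemma hasSum_pow_div_log_tail_of_abs_lt_one {y : ℝ} (hy : |y| < 1) (k : ℕ) :
    HasSum (fun n : ℕ => y ^ (n + k + 1) / (n + k + 1))
      (-log (1 - y) - ∑ i ∈ Finset.range k, y ^ (i + 1) / (i + 1)) := by
  exact_mod_cast (hasSum_nat_add_iff' k).mpr (hasSum_pow_div_log_of_abs_lt_one hy)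

lemma HasSum.prod_of_nonneg {α β : Type*} {f : α × β → ℝ} (hf : 0 ≤ f) {r : α → ℝ} {a : ℝ}
    (hrow : ∀ x, HasSum (fun y => f (x, y)) (r x)) (hcol : HasSum r a) : HasSum f a := by
  have hsummable : Summable f := by
    rw [summable_prod_of_nonneg hf]
    exact ⟨fun x => (hrow x).summable, hcol.summable.congr fun x => (hrow x).tsum_eq.symm⟩
  rw [← (hsummable.hasSum.prod_fiberwise hrow).unique hcol]
  exact hsummable.hasSum

lemma tendsto_neg_log_one_sub_sub_div_sq :
    Tendsto (fun y : ℝ => (-log (1 - y) - y - y ^ 2 / 2) / y ^ 2) (𝓝 0) (𝓝 0) := by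
  have hbound : ∀ᶠ y in 𝓝 (0 : ℝ), ‖(-log (1 - y) - y - y ^ 2 / 2) / y ^ 2‖ ≤ |y| / (1 - |y|) := by
    filter_upwards [Metric.ball_mem_nhds (0 : ℝ) one_pos] with y hy
    rw [Metric.mem_ball, dist_zero_right, norm_eq_abs] at hy
    rcases eq_or_ne y 0 with rfl | hy0
    · simp
    have h : |y + y ^ 2 / 2 + log (1 - y)| ≤ |y| ^ 3 / (1 - |y|) := by
      have h := abs_log_sub_add_sum_range_le hy 2
      norm_num [Finset.sum_range_succ] at h
      exact h
    simp only [norm_div, norm_pow, norm_eq_abs, sq_abs]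
    rw [div_le_iff₀ (by positivity)]
    calc |-log (1 - y) - y - y ^ 2 / 2| = |y + y ^ 2 / 2 + log (1 - y)| := by
          rw [← abs_neg]; ring_nf
      _ ≤ |y| ^ 3 / (1 - |y|) := h
      _ = |y| / (1 - |y|) * y ^ 2 := by rw [← sq_abs y]; ring
  have hlim : Tendsto (fun y : ℝ => |y| / (1 - |y|)) (𝓝 0) (𝓝 0) := by
    have : ContinuousAt (fun y : ℝ => |y| / (1 - |y|)) 0 := by fun_prop (disch := norm_num)
    simpa using this.tendsto
  exact squeeze_zero_norm' hbound hlim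

lemma lintegral_Ioc_ofReal_deriv_eq_sub {f f' : ℝ → ℝ} {a b fa : ℝ} (hab : a < b)
    (hderiv : ∀ x ∈ Ioc a b, HasDerivAt f (f' x) x) (hpos : ∀ x ∈ Ioc a b, 0 ≤ f' x)
    (ha : Tendsto f (𝓝[>] a) (𝓝 fa)) :
    ∫⁻ x in Ioc a b, ENNReal.ofReal (f' x) = ENNReal.ofReal (f b - fa) := by
  classical
  -- redefined at `a` by its limit, `f` becomes continuous on `[a, b]`
  set F := Function.update f a fa
  have hFderiv : ∀ x ∈ Ioo a b, HasDerivAt F (f' x) x := fun x hx =>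
    (hderiv x (Ioo_subset_Ioc_self hx)).congr_of_eventuallyEq <| by
      filter_upwards [Ioi_mem_nhds hx.1] with y hy using Function.update_of_ne hy.ne' _ _
  have hcont : ContinuousOn F (Icc a b) := by
    rw [continuousOn_update_iff, Icc_sdiff_left]
    refine ⟨fun x hx => (hderiv x ⟨hx.1, hx.2⟩).continuousAt.continuousWithinAt, fun _ => ?_⟩
    exact ha.mono_left (nhdsWithin_mono _ Ioc_subset_Ioi_self)
  have hint := intervalIntegral.integrableOn_deriv_of_nonneg hcont hFderiv
    (fun x hx => hpos x (Ioo_subset_Ioc_self hx))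
  rw [← ofReal_integral_eq_lintegral_ofReal hint
      ((ae_restrict_iff' measurableSet_Ioc).mpr (ae_of_all _ hpos)),
    ← intervalIntegral.integral_of_le hab.le,
    intervalIntegral.integral_eq_sub_of_hasDerivAt_of_le hab.le hcont hFderiv
      ((intervalIntegrable_iff_integrableOn_Ioc_of_le hab.le).mpr hint)]
  simp [F, hab.ne']

lemma measure_eq_tsum_preimage_singleton_inter {α β : Type*} [MeasurableSpace α]
    [MeasurableSpace β] [Countable β] [MeasurableSingletonClass β] (μ : Measure α) {f : α → β}
    (hf : Measurable f) (A : Set α) : μ A = ∑' b, μ (f ⁻¹' {b} ∩ A) := by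
  have h := tsum_measure_preimage_singleton (μ := μ.restrict A) countable_univ
    (fun b _ => hf (measurableSet_singleton b))
  rw [tsum_univ (f := fun b => μ.restrict A (f ⁻¹' {b}))] at h
  simp only [preimage_univ, Measure.restrict_apply_univ,
    Measure.restrict_apply (hf (measurableSet_singleton _))] at h
  exact h.symm

lemma yuleJointDensity_nonneg (t : ℝ) (i j : ℕ) {v : ℝ} (hv0 : 0 ≤ v) (hvt : v ≤ t) :
    0 ≤ yuleJointDensity t i j v := by
  have h1 : 0 ≤ 1 - exp (-(t - v)) := by simp; linarith
  have h2 : 0 ≤ 1 - exp (-v) := by simp; linarith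
  unfold yuleJointDensity
  positivity

lemma hasSum_yuleJointDensity_add {t v : ℝ} (hvt : v < t) (m : ℕ) :
    HasSum (fun k : ℕ => yuleJointDensity t (m + 2) (m + 2 + k) v)
      (exp (-v) * (1 - exp (-v)) ^ m * (2 * (m + 1) + 4 * exp (-(t - v))) /
        ((m + 2) * (m + 3))) := by
  set a := exp (-(t - v))
  have ha0 : 0 < a := exp_pos _
  have ha1 : a < 1 := exp_lt_one_iff.mpr (by linarith)
  have hx : ‖1 - a‖ < 1 := by rw [norm_eq_abs, abs_lt]; constructor <;> linarith
  have hpow : exp (-(t - v) * ((m + 2 : ℕ) : ℝ)) = a ^ (m + 2) := by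
    rw [mul_comm, exp_nat_mul]
  have hterm : ∀ k : ℕ, yuleJointDensity t (m + 2) (m + 2 + k) v =
      2 * exp (-v) * (1 - exp (-v)) ^ m * a ^ (m + 2) / ((m + 2) * (m + 3)) *
        (((k + m).choose m : ℝ) * (m + k + 3) * (1 - a) ^ k) := by
    intro k
    rw [yuleJointDensity, hpow, show m + 2 + k - 2 = k + m by omega,
      show m + 2 - 2 = m by omega, show m + 2 + k - (m + 2) = k by omega]
    push_cast
    field_simp
    ring
  have hsum : exp (-v) * (1 - exp (-v)) ^ m * (2 * (m + 1) + 4 * a) / ((m + 2) * (m + 3)) =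
      2 * exp (-v) * (1 - exp (-v)) ^ m * a ^ (m + 2) / ((m + 2) * (m + 3)) *
        ((m + 1) * (1 / (1 - (1 - a)) ^ (m + 2)) + 2 * (1 / (1 - (1 - a)) ^ (m + 1))) := by
    rw [sub_sub_cancel]
    field_simp
    ring
  simp_rw [hterm, hsum]
  exact (hasSum_choose_mul_add_three_mul_geometric m hx).mul_left _

/-- The density on `(0, t)` of `s` restricted to the event `{Y_t ≥ 2}`. -/
noncomputable def yuleMrcaDensity (t v : ℝ) : ℝ :=
  exp (-v) * ((4 * exp (-(t - v)) - 2) * (v - (1 - exp (-v))) / (1 - exp (-v)) ^ 2 +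
    (4 - 4 * exp (-(t - v))) * (v - (1 - exp (-v)) - (1 - exp (-v)) ^ 2 / 2) /
      (1 - exp (-v)) ^ 3)

lemma hasSum_yuleMrcaDensity (t : ℝ) {v : ℝ} (hv0 : 0 < v) :
    HasSum (fun m : ℕ => exp (-v) * (1 - exp (-v)) ^ m * (2 * (m + 1) + 4 * exp (-(t - v))) /
        ((m + 2) * (m + 3)))
      (yuleMrcaDensity t v) := by
  set a := exp (-(t - v))
  set b := exp (-v)
  set y := 1 - b
  have hb1 : b < 1 := exp_lt_one_iff.mpr (by linarith)
  have hy0 : 0 < y := by linarith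
  have hy : |y| < 1 := by rw [abs_lt]; constructor <;> linarith [exp_pos (-v)]
  have hlog : -log (1 - y) = v := by simp [y, b]
  have h2 : HasSum (fun n : ℕ => y ^ (n + 2) / (n + 2)) (v - y) := by
    simpa [hlog, add_assoc, one_add_one_eq_two] using hasSum_pow_div_log_tail_of_abs_lt_one hy 1
  have h3 : HasSum (fun n : ℕ => y ^ (n + 3) / (n + 3)) (v - y - y ^ 2 / 2) := by
    have h := hasSum_pow_div_log_tail_of_abs_lt_one hy 2
    norm_num [hlog, Finset.sum_range_succ, add_assoc] at h
    simpa [sub_sub] using h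
  have hterm : ∀ m : ℕ, b * y ^ m * (2 * (m + 1) + 4 * a) / ((m + 2) * (m + 3)) =
      b * (4 * a - 2) / y ^ 2 * (y ^ (m + 2) / (m + 2)) +
        b * (4 - 4 * a) / y ^ 3 * (y ^ (m + 3) / (m + 3)) := by
    intro m
    field_simp
    ring
  have hval : yuleMrcaDensity t v =
      b * (4 * a - 2) / y ^ 2 * (v - y) + b * (4 - 4 * a) / y ^ 3 * (v - y - y ^ 2 / 2) := by
    simp only [yuleMrcaDensity]
    ring
  simp_rw [hterm, hval]
  exact (h2.mul_left _).add (h3.mul_left _)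

/-- Off `2 ≤ i ≤ j` the truncated subtractions in `yuleJointDensity` make it nonzero, so it is
cut off there. -/
noncomputable def yulePairDensity (t : ℝ) (p : ℕ × ℕ) (v : ℝ) : ℝ :=
  if 2 ≤ p.1 ∧ p.1 ≤ p.2 then yuleJointDensity t p.1 p.2 v else 0

lemma yulePairDensity_nonneg (t : ℝ) (p : ℕ × ℕ) {v : ℝ} (hv0 : 0 ≤ v) (hvt : v ≤ t) :
    0 ≤ yulePairDensity t p v := by
  unfold yulePairDensity
  split_ifs
  exacts [yuleJointDensity_nonneg t _ _ hv0 hvt, le_rfl]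

lemma continuous_yulePairDensity (t : ℝ) (p : ℕ × ℕ) : Continuous (yulePairDensity t p) := by
  unfold yulePairDensity yuleJointDensity
  split_ifs <;> fun_prop

lemma hasSum_yulePairDensity {t v : ℝ} (hv0 : 0 < v) (hvt : v < t) :
    HasSum (fun p => yulePairDensity t p v) (yuleMrcaDensity t v) := by
  let shift : ℕ × ℕ → ℕ × ℕ := fun q => (q.1 + 2, q.1 + 2 + q.2)
  have hshift : Function.Injective shift := by
    intro q q' h
    simp only [shift, Prod.mk.injEq] at h
    ext <;> omega
  have hsupp : ∀ p ∉ range shift, yulePairDensity t p v = 0 := by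
    intro p hp
    rw [yulePairDensity, if_neg]
    rintro ⟨h1, h2⟩
    exact hp ⟨(p.1 - 2, p.2 - p.1), by ext <;> simp only [shift] <;> omega⟩
  rw [← hshift.hasSum_iff hsupp]
  refine HasSum.prod_of_nonneg (fun q => yulePairDensity_nonneg t _ hv0.le hvt.le)
    (fun m => ?_) (hasSum_yuleMrcaDensity t hv0)
  simpa [shift, yulePairDensity] using hasSum_yuleJointDensity_add hvt m

/-- `P(Y_t ≥ 2, s ≤ v)`. -/
noncomputable def yuleMrcaCdf (t v : ℝ) : ℝ :=
  (1 - 2 * v * exp (-v) - exp (-2 * v) + exp (-t) * (2 * v - 3 + 4 * exp (-v) - exp (-2 * v))) /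
    (1 - exp (-v)) ^ 2

lemma hasDerivAt_yuleMrcaCdf (t : ℝ) {v : ℝ} (hv0 : 0 < v) :
    HasDerivAt (yuleMrcaCdf t) (yuleMrcaDensity t v) v := by
  have hE : HasDerivAt (fun w => exp (-w)) (-exp (-v)) v := by
    simpa using (hasDerivAt_neg v).exp
  have hE2 : HasDerivAt (fun w => exp (-2 * w)) (exp (-2 * v) * (-2)) v := by
    simpa using ((hasDerivAt_id v).const_mul (-2)).exp
  have hid2 : HasDerivAt (fun w : ℝ => 2 * w) 2 v := by simpa using (hasDerivAt_id v).const_mul 2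
  have hnum := (((hasDerivAt_const v 1).sub (hid2.mul hE)).sub hE2).add
    ((((hid2.sub_const 3).add (hE.const_mul 4)).sub hE2).const_mul (exp (-t)))
  have hden := ((hasDerivAt_const v 1).sub hE).pow 2
  have hy : 1 - exp (-v) ≠ 0 := by
    have : exp (-v) < 1 := exp_lt_one_iff.mpr (by linarith)
    linarith
  refine (hnum.div hden (pow_ne_zero 2 hy)).congr_deriv ?_
  have hEtv : exp (-(t - v)) = exp (-t) / exp (-v) := by rw [← exp_sub]; ring_nf
  have hE2v : exp (-2 * v) = exp (-v) ^ 2 := by rw [← exp_nat_mul]; ring_nf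
  simp only [yuleMrcaDensity, Pi.add_apply, Pi.sub_apply, Pi.mul_apply, Pi.pow_apply, hEtv, hE2v]
  field_simp
  ring

lemma yuleMrcaCdf_eq_of_ne_zero (t : ℝ) {v : ℝ} (hv : v ≠ 0) :
    yuleMrcaCdf t v = (1 - exp (-v)) + 2 * (exp (-t) - 1 + (1 - exp (-v))) *
      ((-log (1 - (1 - exp (-v))) - (1 - exp (-v)) - (1 - exp (-v)) ^ 2 / 2) /
        (1 - exp (-v)) ^ 2) := by
  have hy : 1 - exp (-v) ≠ 0 := by
    rw [sub_ne_zero, ne_comm, Ne, exp_eq_one_iff]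
    exact neg_ne_zero.mpr hv
  have hE2v : exp (-2 * v) = exp (-v) ^ 2 := by rw [← exp_nat_mul]; ring_nf
  rw [yuleMrcaCdf, sub_sub_cancel, log_exp, hE2v]
  field_simp
  ring

lemma tendsto_yuleMrcaCdf_zero (t : ℝ) : Tendsto (yuleMrcaCdf t) (𝓝[>] 0) (𝓝 0) := by
  have hy : Tendsto (fun v : ℝ => 1 - exp (-v)) (𝓝[>] 0) (𝓝 0) :=
    tendsto_nhdsWithin_of_tendsto_nhds
      ((by fun_prop : Continuous fun v : ℝ => 1 - exp (-v)).tendsto' 0 0 (by simp))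
  have hlim : Tendsto (fun v => (1 - exp (-v)) + 2 * (exp (-t) - 1 + (1 - exp (-v))) *
      ((fun y : ℝ => (-log (1 - y) - y - y ^ 2 / 2) / y ^ 2) (1 - exp (-v))))
      (𝓝[>] 0) (𝓝 (0 + 2 * (exp (-t) - 1 + 0) * 0)) :=
    hy.add (((tendsto_const_nhds.add hy).const_mul 2).mul
      (tendsto_neg_log_one_sub_sub_div_sq.comp hy))
  rw [mul_zero, add_zero] at hlim
  refine hlim.congr' ?_
  filter_upwards [self_mem_nhdsWithin] with v hv
  exact (yuleMrcaCdf_eq_of_ne_zero t (ne_of_gt hv)).symm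

lemma ofReal_integral_yuleJointDensity {t u : ℝ} (hut : u ≤ t) (i j : ℕ) :
    ENNReal.ofReal (∫ v in Ioc 0 u, yuleJointDensity t i j v) =
      ∫⁻ v in Ioc 0 u, ENNReal.ofReal (yuleJointDensity t i j v) := by
  refine ofReal_integral_eq_lintegral_ofReal
    (by unfold yuleJointDensity; fun_prop : Continuous _).integrableOn_Ioc ?_
  exact (ae_restrict_iff' measurableSet_Ioc).mpr <| ae_of_all _ fun v hv =>
    yuleJointDensity_nonneg t i j hv.1.le (hv.2.trans hut)

lemma tsum_lintegral_yulePairDensity {t u : ℝ} (hu0 : 0 < u) (hut : u < t) :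
    ∑' p, ∫⁻ v in Ioc 0 u, ENNReal.ofReal (yulePairDensity t p v) =
      ENNReal.ofReal (yuleMrcaCdf t u) := by
  have hsum (v : ℝ) (hv : v ∈ Ioc 0 u) := hasSum_yulePairDensity hv.1 (hv.2.trans_lt hut)
  have hnonneg (v : ℝ) (hv : v ∈ Ioc 0 u) (p : ℕ × ℕ) : 0 ≤ yulePairDensity t p v :=
    yulePairDensity_nonneg t p hv.1.le (hv.2.trans hut.le)
  rw [← lintegral_tsum fun p =>
      (continuous_yulePairDensity t p).measurable.ennreal_ofReal.aemeasurable,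
    setLIntegral_congr_fun measurableSet_Ioc fun v hv => ?_,
    lintegral_Ioc_ofReal_deriv_eq_sub hu0 (fun v hv => hasDerivAt_yuleMrcaCdf t hv.1)
      (fun v hv => (hsum v hv).nonneg (hnonneg v hv)) (tendsto_yuleMrcaCdf_zero t), sub_zero]
  rw [← (hsum v hv).tsum_eq, ENNReal.ofReal_tsum_of_nonneg (hnonneg v hv) (hsum v hv).summable]

lemma prodMk_preimage_singleton_inter_eq_ite {Ω : Type*} {s : Ω → ℝ} {I Y : Ω → ℕ}
    (hIY : ∀ ω, 2 ≤ Y ω → 2 ≤ I ω ∧ I ω ≤ Y ω) (u : ℝ) (p : ℕ × ℕ) :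
    (fun ω => (I ω, Y ω)) ⁻¹' {p} ∩ ({ω | 2 ≤ Y ω} ∩ {ω | s ω ≤ u}) =
      if 2 ≤ p.1 ∧ p.1 ≤ p.2 then {ω | s ω ≤ u ∧ I ω = p.1 ∧ Y ω = p.2} else ∅ := by
  ext ω
  split_ifs <;> simp only [mem_inter_iff, mem_preimage, mem_singleton_iff, mem_ofPred_eq,
    Prod.ext_iff, mem_empty_iff_false] <;> grind

theorem yule_mrca_distribution_general {Ω : Type*} [MeasurableSpace Ω]
    (μ : Measure Ω)
    (t : ℝ)
    (s : Ω → ℝ) (I Y : Ω → ℕ)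
    (hI : Measurable I) (hY : Measurable Y)
    (hrange : ∀ ω, 2 ≤ Y ω → 2 ≤ I ω ∧ I ω ≤ Y ω ∧ 0 < s ω ∧ s ω < t)
    (hYdist : μ {ω | 2 ≤ Y ω} = ENNReal.ofReal (1 - Real.exp (-t)))
    (hjoint : ∀ u : ℝ, 0 < u → u < t → ∀ i j : ℕ, 2 ≤ i → i ≤ j →
      μ {ω | s ω ≤ u ∧ I ω = i ∧ Y ω = j} =
        ENNReal.ofReal (∫ v in Set.Ioc (0 : ℝ) u, yuleJointDensity t i j v))
    (u : ℝ) (hu0 : 0 < u) (hut : u < t) :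
    (μ[|{ω | 2 ≤ Y ω}]) {ω | s ω ≤ u} =
      ENNReal.ofReal
        ((1 - 2 * u * Real.exp (-u) - Real.exp (-2 * u) +
            Real.exp (-t) * (2 * u - 3 + 4 * Real.exp (-u) - Real.exp (-2 * u))) /
          ((1 - Real.exp (-t)) * (1 - Real.exp (-u)) ^ 2)) := by
  have hfiber (p : ℕ × ℕ) :
      μ ((fun ω => (I ω, Y ω)) ⁻¹' {p} ∩ ({ω | 2 ≤ Y ω} ∩ {ω | s ω ≤ u})) =
        ∫⁻ v in Ioc 0 u, ENNReal.ofReal (yulePairDensity t p v) := by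
    rw [prodMk_preimage_singleton_inter_eq_ite (fun ω h => ⟨(hrange ω h).1, (hrange ω h).2.1⟩)]
    by_cases hp : 2 ≤ p.1 ∧ p.1 ≤ p.2
    · simp only [if_pos hp, yulePairDensity]
      rw [hjoint u hu0 hut p.1 p.2 hp.1 hp.2, ofReal_integral_yuleJointDensity hut.le]
    · simp [hp, yulePairDensity]
  have hcdf : μ ({ω | 2 ≤ Y ω} ∩ {ω | s ω ≤ u}) = ENNReal.ofReal (yuleMrcaCdf t u) := by
    rw [measure_eq_tsum_preimage_singleton_inter μ (hI.prodMk hY), tsum_congr hfiber,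
      tsum_lintegral_yulePairDensity hu0 hut]
  have hc : 0 < 1 - exp (-t) := by simp; linarith
  have hA : MeasurableSet {ω | 2 ≤ Y ω} := hY measurableSet_Ici
  rw [cond_apply hA μ, hcdf, hYdist,
    ← ENNReal.ofReal_inv_of_pos hc, ← ENNReal.ofReal_mul (inv_nonneg.mpr hc.le), yuleMrcaCdf,
    inv_mul_eq_div, div_div, mul_comm ((1 - exp (-u)) ^ 2)]

/-- For a rate-1 Yule process `Y` started from one individual, with
`P(Y_t ≥ 2) = 1 - e^{-t}`, sample two distinct individuals uniformly at random at
time `t ≥ 0` and let `s` be the death (splitting) time of their most recent common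
ancestor, `I` the population size just after it; the joint law is given by the
density `yuleJointDensity`.  Then, conditionally on `{Y_t ≥ 2}`, the distribution
function of `s` satisfies, for `0 < u < t`:
`Q_0^{(t)}(s ≤ u) = [1 - 2u e^{-u} - e^{-2u} + e^{-t}(2u - 3 + 4e^{-u} - e^{-2u})]
                  / [(1 - e^{-t})(1 - e^{-u})²]`. -/
theorem yule_mrca_distribution {Ω : Type*} [MeasurableSpace Ω]
    (μ : Measure Ω) [IsProbabilityMeasure μ]
    (t : ℝ) (ht : 0 < t)
    (s : Ω → ℝ) (I Y : Ω → ℕ)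
    (hs : Measurable s) (hI : Measurable I) (hY : Measurable Y)
    (hrange : ∀ ω, 2 ≤ Y ω → 2 ≤ I ω ∧ I ω ≤ Y ω ∧ 0 < s ω ∧ s ω < t)
    (hYdist : μ {ω | 2 ≤ Y ω} = ENNReal.ofReal (1 - Real.exp (-t)))
    (hjoint : ∀ u : ℝ, 0 < u → u < t → ∀ i j : ℕ, 2 ≤ i → i ≤ j →
      μ {ω | s ω ≤ u ∧ I ω = i ∧ Y ω = j} =
        ENNReal.ofReal (∫ v in Set.Ioc (0 : ℝ) u, yuleJointDensity t i j v))
    (u : ℝ) (hu0 : 0 < u) (hut : u < t) :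
    (μ[|{ω | 2 ≤ Y ω}]) {ω | s ω ≤ u} =
      ENNReal.ofReal
        ((1 - 2 * u * Real.exp (-u) - Real.exp (-2 * u) +
            Real.exp (-t) * (2 * u - 3 + 4 * Real.exp (-u) - Real.exp (-2 * u))) /
          ((1 - Real.exp (-t)) * (1 - Real.exp (-u)) ^ 2)) :=
  yule_mrca_distribution_general μ t s I Y hI hY hrange hYdist hjoint u hu0 hut
end

section
/- For 0 < u < t, the series identity holds: Σ_{i=2}^{∞} e^{-u} · 2(2e^{-(t-u)} + i - 1)(1 - e^{-u})^{i-2} / ((1 - e^{-t}) i (i+1)) = 2 [e^{-u}(u - 2 + (u+2)e^{-u}) + e^{-t}(1 - 2u e^{-u} - e^{-2u})] / [(1 - e^{-t})(1 - e^{-u})^3]. -/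
/-!
Write `x = 1 - e^{-u}` and `E = e^{-(t-u)}`, so that `-log (1 - x) = u` and `e^{-t} = E e^{-u}`.
The partial fraction decomposition `(2E + i - 1) / (i (i + 1)) = (2E - 1) / i + (2 - 2E) / (i + 1)`
splits the series into two tails of the logarithmic series `Σ x^k / k = -log (1 - x)`,
which are `u - x` and `u - x - x² / 2` after dividing out `x²` and `x³` respectively.
-/

open Real Finset

theorem hasSum_pow_div_log_tail {x : ℝ} (hx : |x| < 1) (k : ℕ) :
    HasSum (fun n : ℕ => x ^ (n + k + 1) / (n + k + 1))
      (-log (1 - x) - ∑ j ∈ range k, x ^ (j + 1) / (j + 1)) := by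
  have := (hasSum_nat_add_iff' k).mpr (hasSum_pow_div_log_of_abs_lt_one hx)
  simpa only [Nat.cast_add] using this

theorem hasSum_pow_div_add_two {x : ℝ} (hx : |x| < 1) :
    HasSum (fun n : ℕ => x ^ (n + 2) / (n + 2)) (-log (1 - x) - x) := by
  convert hasSum_pow_div_log_tail hx 1 using 1
  · ext n
    push_cast
    ring_nf
  · simp

theorem hasSum_pow_div_add_three {x : ℝ} (hx : |x| < 1) :
    HasSum (fun n : ℕ => x ^ (n + 3) / (n + 3)) (-log (1 - x) - x - x ^ 2 / 2) := by
  convert hasSum_pow_div_log_tail hx 2 using 1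
  · ext n
    push_cast
    ring_nf
  · simp only [sum_range_succ, sum_range_zero]
    ring

theorem hasSum_affine_mul_pow_div {x : ℝ} (hx : |x| < 1) (hx0 : x ≠ 0) (p q : ℝ) :
    HasSum (fun n : ℕ => (p + q * (n + 2)) * x ^ n / ((n + 2) * (n + 3)))
      (p * (-log (1 - x) - x) / x ^ 2 + (q - p) * (-log (1 - x) - x - x ^ 2 / 2) / x ^ 3) := by
  have h := ((hasSum_pow_div_add_two hx).mul_left (p / x ^ 2)).add
    ((hasSum_pow_div_add_three hx).mul_left ((q - p) / x ^ 3))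
  rw [div_mul_eq_mul_div, div_mul_eq_mul_div] at h
  refine h.congr_fun fun n => ?_
  field_simp
  ring

/-- For real `0 < u < t` the series identity holds (index `i = n + 2`
runs over the integers `i ≥ 2`):
`Σ_{i≥2} e^{-u} · 2(2e^{-(t-u)} + i - 1)(1 - e^{-u})^{i-2} / ((1 - e^{-t}) i (i+1))
 = 2[e^{-u}(u - 2 + (u+2)e^{-u}) + e^{-t}(1 - 2u e^{-u} - e^{-2u})]
   / [(1 - e^{-t})(1 - e^{-u})³]`. -/
theorem yule_density_series (u t : ℝ) (hu : 0 < u) (hut : u < t) :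
    ∑' n : ℕ,
        Real.exp (-u) * (2 * (2 * Real.exp (-(t - u)) + ((n : ℝ) + 2) - 1) *
          (1 - Real.exp (-u)) ^ n) /
          ((1 - Real.exp (-t)) * ((n : ℝ) + 2) * ((n : ℝ) + 3)) =
      2 * (Real.exp (-u) * (u - 2 + (u + 2) * Real.exp (-u)) +
          Real.exp (-t) * (1 - 2 * u * Real.exp (-u) - Real.exp (-2 * u))) /
        ((1 - Real.exp (-t)) * (1 - Real.exp (-u)) ^ 3) := by
  have hexp_u : Real.exp (-u) < 1 := exp_lt_one_iff.mpr (by linarith)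
  have hx_pos : 0 < 1 - Real.exp (-u) := by linarith
  have hx_abs : |1 - Real.exp (-u)| < 1 := by
    rw [abs_of_pos hx_pos]; linarith [exp_pos (-u)]
  have hlog : -log (1 - (1 - Real.exp (-u))) = u := by simp
  have het : Real.exp (-t) = Real.exp (-(t - u)) * Real.exp (-u) := by rw [← exp_add]; ring_nf
  have h2u : Real.exp (-2 * u) = Real.exp (-u) ^ 2 := by rw [← exp_nat_mul]; ring_nf
  have het_ne : 1 - Real.exp (-(t - u)) * Real.exp (-u) ≠ 0 :=
    het ▸ sub_ne_zero.mpr (exp_lt_one_iff.mpr (by linarith)).ne'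
  have hsum := (hasSum_affine_mul_pow_div hx_abs hx_pos.ne' (2 * Real.exp (-(t - u)) - 1) 1).mul_left
    (2 * Real.exp (-u) / (1 - Real.exp (-(t - u)) * Real.exp (-u)))
  rw [hlog] at hsum
  rw [het, h2u, (hsum.congr_fun fun n => by field_simp; ring).tsum_eq]
  field_simp
  ring
end

section
/- Let w be a C² function on ℝ² with 0 < w ≤ 1 satisfying (1/2)Δw = V(w² - w) where V ≥ 0 is bounded and not identically zero on the region where w < 1. If w < 1 everywhere, then w is a nonconstant bounded superharmonic function on ℝ², contradicting recurrence of two-dimensional Brownian motion; hence w ≡ 1. -/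
/-!
Since `V ≥ 0` and `0 < w ≤ 1`, the equation gives `Δw ≤ 0`, so `w` is a positive superharmonic
function on the plane and therefore constant; a constant `w < 1` would make `V (w² - w)` vanish at
a point where `V ≠ 0` and `w² ≠ w`.

Constancy is the two-dimensional Liouville property, obtained from the maximum principle.
Perturbing by `-ε |x|²` yields the weak minimum principle on compact sets. On an annulus around
`c` the function `u + ε log |x - c|²` is again superharmonic, and once the outer radius is large
the lower bound of `u` keeps its minimum off the outer circle; letting `ε → 0` shows that every
circle around `c` inside `|z - c|` carries a point where `u ≤ u z`, and shrinking the circle gives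
`u c ≤ u z`. It is here that the dimension enters: `log |x|` is harmonic and unbounded above.
-/

open Real

/-- The Laplacian `Δw = Σ_i ∂²w/∂x_i²` on `ℝ²`. -/
noncomputable def laplacian2 (w : (Fin 2 → ℝ) → ℝ) (x : Fin 2 → ℝ) : ℝ :=
  ∑ i : Fin 2, fderiv ℝ (fun y => fderiv ℝ w y (Pi.single i 1)) x (Pi.single i 1)

open Filter Topology Set

theorem IsLocalMin.deriv_deriv_nonneg {f : ℝ → ℝ} {x : ℝ} (h : IsLocalMin f x)
    (hc : ContinuousAt f x) : 0 ≤ deriv (deriv f) x := by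
  by_contra! hneg
  have hmax : IsLocalMax f x := isLocalMax_of_deriv_deriv_neg hneg h.deriv_eq_zero hc
  have hconst : f =ᶠ[𝓝 x] fun _ => f x := (h.and hmax).mono fun _ ht => le_antisymm ht.2 ht.1
  exact hneg.ne (by rw [hconst.deriv.deriv_eq]; simp)

section SecondDirectionalDerivative

variable {E : Type*} [NormedAddCommGroup E] [NormedSpace ℝ E] {f g : E → ℝ} {x : E}

theorem ContDiffAt.differentiableAt_fderiv_apply (hf : ContDiffAt ℝ 2 f x) (v : E) :
    DifferentiableAt ℝ (fun y => fderiv ℝ f y v) x :=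
  ((hf.fderiv_right le_rfl).clm_apply contDiffAt_const).differentiableAt one_ne_zero

theorem ContDiffAt.fderiv_fderiv_apply_eq_deriv_deriv (hf : ContDiffAt ℝ 2 f x) (v : E) :
    fderiv ℝ (fun y => fderiv ℝ f y v) x v = deriv (deriv fun t : ℝ => f (x + t • v)) 0 := by
  have hline : ∀ t : ℝ, HasDerivAt (fun t : ℝ => x + t • v) v t := fun t => by
    simpa using ((hasDerivAt_id t).smul_const v).const_add x
  have hline0 : Tendsto (fun t : ℝ => x + t • v) (𝓝 0) (𝓝 x) := by
    simpa using (hline 0).continuousAt.tendsto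
  have hdiff : ∀ᶠ t in 𝓝 (0 : ℝ), DifferentiableAt ℝ f (x + t • v) :=
    hline0.eventually ((hf.eventually (by simp)).mono fun y hy => hy.differentiableAt two_ne_zero)
  have hderiv : deriv (fun t : ℝ => f (x + t • v)) =ᶠ[𝓝 0] fun t => fderiv ℝ f (x + t • v) v :=
    hdiff.mono fun t ht => (ht.hasFDerivAt.comp_hasDerivAt t (hline t)).deriv
  rw [hderiv.deriv_eq]
  exact ((hf.differentiableAt_fderiv_apply v).hasFDerivAt.comp_hasDerivAt_of_eq (0 : ℝ)
    (hline 0) (by simp)).deriv.symm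

theorem IsLocalMin.fderiv_fderiv_apply_nonneg (h : IsLocalMin f x) (hf : ContDiffAt ℝ 2 f x)
    (v : E) : 0 ≤ fderiv ℝ (fun y => fderiv ℝ f y v) x v := by
  rw [hf.fderiv_fderiv_apply_eq_deriv_deriv]
  refine IsLocalMin.deriv_deriv_nonneg ?_ ?_
  · exact IsLocalMin.comp_continuous (g := fun t : ℝ => x + t • v) (b := 0) (by simpa)
      (by fun_prop)
  · exact hf.continuousAt.comp_of_eq (by fun_prop) (by simp)

theorem ContDiffAt.fderiv_fderiv_apply_add (hf : ContDiffAt ℝ 2 f x) (hg : ContDiffAt ℝ 2 g x)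
    (v : E) : fderiv ℝ (fun y => fderiv ℝ (fun z => f z + g z) y v) x v =
      fderiv ℝ (fun y => fderiv ℝ f y v) x v + fderiv ℝ (fun y => fderiv ℝ g y v) x v := by
  have hsum : (fun y => fderiv ℝ (fun z => f z + g z) y v) =ᶠ[𝓝 x]
      fun y => fderiv ℝ f y v + fderiv ℝ g y v := by
    filter_upwards [hf.eventually (by simp), hg.eventually (by simp)] with y hfy hgy
    rw [fderiv_fun_add (hfy.differentiableAt two_ne_zero) (hgy.differentiableAt two_ne_zero)]
    rfl
  rw [hsum.fderiv_eq, fderiv_fun_add (hf.differentiableAt_fderiv_apply v)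
    (hg.differentiableAt_fderiv_apply v)]
  rfl

end SecondDirectionalDerivative

section Laplacian

variable {f g : (Fin 2 → ℝ) → ℝ} {x : Fin 2 → ℝ}

theorem laplacian2_add (hf : ContDiffAt ℝ 2 f x) (hg : ContDiffAt ℝ 2 g x) :
    laplacian2 (fun y => f y + g y) x = laplacian2 f x + laplacian2 g x := by
  simp only [laplacian2, hf.fderiv_fderiv_apply_add hg, Finset.sum_add_distrib]

theorem IsLocalMin.laplacian2_nonneg (h : IsLocalMin f x) (hf : ContDiffAt ℝ 2 f x) :
    0 ≤ laplacian2 f x :=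
  Finset.sum_nonneg fun _ _ => h.fderiv_fderiv_apply_nonneg hf _

end Laplacian

theorem deriv_deriv_comp_quadratic {φ : ℝ → ℝ} {q : ℝ} (hφ : ContDiffAt ℝ 2 φ q) (a : ℝ) :
    deriv (deriv fun t => φ (q + 2 * a * t + t ^ 2)) 0 =
      4 * a ^ 2 * deriv (deriv φ) q + 2 * deriv φ q := by
  have hp : ∀ t : ℝ, HasDerivAt (fun t => q + 2 * a * t + t ^ 2) (2 * a + 2 * t) t := fun t => by
    simpa using (((hasDerivAt_id t).const_mul (2 * a)).const_add q).fun_add (hasDerivAt_pow 2 t)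
  have hp0 : Tendsto (fun t : ℝ => q + 2 * a * t + t ^ 2) (𝓝 0) (𝓝 q) := by
    simpa using (hp 0).continuousAt.tendsto
  have hderiv : deriv (fun t => φ (q + 2 * a * t + t ^ 2)) =ᶠ[𝓝 0]
      fun t => deriv φ (q + 2 * a * t + t ^ 2) * (2 * a + 2 * t) :=
    (hp0.eventually ((hφ.eventually (by simp)).mono fun s hs =>
      hs.differentiableAt two_ne_zero)).mono fun t ht => (ht.hasDerivAt.comp t (hp t)).deriv
  have hφ' : HasDerivAt (deriv φ) (deriv (deriv φ) q) q :=
    ((hφ.derivWithin (m := 1) le_rfl).differentiableAt one_ne_zero).hasDerivAt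
  have hlin : HasDerivAt (fun t : ℝ => 2 * a + 2 * t) 2 0 := by
    simpa using ((hasDerivAt_id (0 : ℝ)).const_mul 2).const_add (2 * a)
  have hd : HasDerivAt (fun t => deriv φ (q + 2 * a * t + t ^ 2) * (2 * a + 2 * t))
      (deriv (deriv φ) q * (2 * a + 2 * 0) * (2 * a + 2 * 0) + deriv φ q * 2) 0 := by
    simpa using (hφ'.comp_of_eq (0 : ℝ) (hp 0) (by simp)).fun_mul hlin
  rw [hderiv.deriv_eq, hd.deriv]
  ring

-- The squared Euclidean distance: the metric of `Fin 2 → ℝ` is the sup metric, not this one.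
def sqDist (c y : Fin 2 → ℝ) : ℝ := ∑ j, (y j - c j) ^ 2

section SqDist

variable (c : Fin 2 → ℝ)

theorem contDiff_sqDist {n : WithTop ℕ∞} : ContDiff ℝ n (sqDist c) := by
  unfold sqDist; fun_prop

theorem continuous_sqDist : Continuous (sqDist c) :=
  (contDiff_sqDist c (n := 0)).continuous

theorem sqDist_nonneg (y : Fin 2 → ℝ) : 0 ≤ sqDist c y :=
  Finset.sum_nonneg fun _ _ => sq_nonneg _

theorem sqDist_add_smul_single (x : Fin 2 → ℝ) (i : Fin 2) (t : ℝ) :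
    sqDist c (x + t • Pi.single i 1) = sqDist c x + 2 * (x i - c i) * t + t ^ 2 := by
  fin_cases i <;>
  · simp only [sqDist, Fin.sum_univ_two, Fin.zero_eta, Fin.mk_one, Pi.add_apply, Pi.smul_apply,
      smul_eq_mul, Pi.single_eq_same, ne_eq, zero_ne_one, one_ne_zero, not_false_eq_true,
      Pi.single_eq_of_ne, mul_one, mul_zero, add_zero]
    ring

theorem dist_le_sqrt_sqDist (y : Fin 2 → ℝ) : dist y c ≤ √(sqDist c y) := by
  refine (dist_pi_le_iff (Real.sqrt_nonneg _)).mpr fun i => ?_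
  rw [Real.dist_eq]
  exact Real.abs_le_sqrt (Finset.single_le_sum (f := fun j => (y j - c j) ^ 2)
    (fun j _ => sq_nonneg _) (Finset.mem_univ i))

theorem isCompact_sqDist_le (b : ℝ) : IsCompact {y | sqDist c y ≤ b} :=
  Metric.isCompact_of_isClosed_isBounded (isClosed_le (continuous_sqDist c) continuous_const)
    ((Metric.isBounded_closedBall (x := c) (r := √b)).subset fun y hy =>
      (dist_le_sqrt_sqDist c y).trans (Real.sqrt_le_sqrt hy))

theorem exists_sqDist_eq {a : ℝ} (ha : 0 ≤ a) : ∃ y, sqDist c y = a :=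
  ⟨c + √a • Pi.single 0 1, by simp [sqDist, Real.sq_sqrt ha]⟩

end SqDist

theorem laplacian2_comp_sqDist {φ : ℝ → ℝ} {c x : Fin 2 → ℝ}
    (hφ : ContDiffAt ℝ 2 φ (sqDist c x)) :
    laplacian2 (fun y => φ (sqDist c y)) x =
      4 * (sqDist c x * deriv (deriv φ) (sqDist c x) + deriv φ (sqDist c x)) := by
  have hf : ContDiffAt ℝ 2 (fun y => φ (sqDist c y)) x :=
    hφ.comp x (contDiff_sqDist c).contDiffAt
  simp only [laplacian2, hf.fderiv_fderiv_apply_eq_deriv_deriv, sqDist_add_smul_single,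
    deriv_deriv_comp_quadratic hφ, Fin.sum_univ_two]
  simp only [sqDist, Fin.sum_univ_two]
  ring

theorem laplacian2_mul_sqDist (a : ℝ) (c x : Fin 2 → ℝ) :
    laplacian2 (fun y => a * sqDist c y) x = 4 * a := by
  rw [laplacian2_comp_sqDist (φ := fun s => a * s) (by fun_prop)]
  simp

theorem laplacian2_mul_log_sqDist (a : ℝ) {c x : Fin 2 → ℝ} (hx : sqDist c x ≠ 0) :
    laplacian2 (fun y => a * log (sqDist c y)) x = 0 := by
  rw [laplacian2_comp_sqDist (φ := fun s => a * log s) (by fun_prop (disch := exact hx))]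
  have hderiv : deriv (fun s => a * log s) = fun s => a * s⁻¹ := by
    funext s; simp
  rw [hderiv, deriv_const_mul_field', deriv_inv']
  field_simp
  ring

theorem exists_isMinOn_of_laplacian2_nonpos {u : (Fin 2 → ℝ) → ℝ} {K F : Set (Fin 2 → ℝ)}
    (hK : IsCompact K) (hF : IsClosed F) (hFK : F ⊆ K) (hFne : F.Nonempty)
    (hKF : K \ F ⊆ interior K) (hu : ContinuousOn u K)
    (hu₂ : ∀ x ∈ K \ F, ContDiffAt ℝ 2 u x) (hΔ : ∀ x ∈ K \ F, laplacian2 u x ≤ 0) :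
    ∃ y ∈ F, IsMinOn u K y := by
  obtain ⟨y, hyF, hymin⟩ := (hK.of_isClosed_subset hF hFK).exists_isMinOn hFne (hu.mono hFK)
  refine ⟨y, hyF, isMinOn_iff.mpr fun x hx => ?_⟩
  by_contra! hxy
  obtain ⟨C, hC⟩ := hK.bddAbove_image (continuous_sqDist 0).continuousOn
  have hC : ∀ z ∈ K, sqDist 0 z ≤ C := fun z hz => hC ⟨z, hz, rfl⟩
  have hC₀ : 0 ≤ C := (sqDist_nonneg 0 x).trans (hC x hx)
  set ε := (u y - u x) / (C + 1)
  have hε : 0 < ε := div_pos (sub_pos.mpr hxy) (by linarith)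
  have hεC : ε * C < u y - u x := by
    rw [div_mul_eq_mul_div, div_lt_iff₀ (by linarith)]
    nlinarith
  set v := fun z => u z + -ε * sqDist 0 z
  obtain ⟨p, hpK, hpmin⟩ := hK.exists_isMinOn (f := v) ⟨x, hx⟩
    (hu.add ((continuous_sqDist 0).continuousOn.const_smul (-ε)))
  have hpF : p ∉ F := fun hpF => by
    have := isMinOn_iff.mp hpmin x hx
    have := isMinOn_iff.mp hymin p hpF
    have := hC p hpK
    have := sqDist_nonneg 0 x
    simp only [v] at *
    nlinarith
  have hsq : ContDiffAt ℝ 2 (fun z => -ε * sqDist 0 z) p :=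
    contDiffAt_const.mul (contDiff_sqDist 0).contDiffAt
  have := (hpmin.isLocalMin (mem_interior_iff_mem_nhds.mp (hKF ⟨hpK, hpF⟩))).laplacian2_nonneg
    ((hu₂ p ⟨hpK, hpF⟩).add hsq)
  rw [laplacian2_add (hu₂ p ⟨hpK, hpF⟩) hsq, laplacian2_mul_sqDist] at this
  linarith [hΔ p ⟨hpK, hpF⟩]

theorem exists_isMinOn_annulus_of_laplacian2_nonpos {u : (Fin 2 → ℝ) → ℝ} {c : Fin 2 → ℝ}
    {a b : ℝ} (ha : 0 ≤ a) (hab : a ≤ b)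
    (hu : ContinuousOn u {y | a ≤ sqDist c y ∧ sqDist c y ≤ b})
    (hu₂ : ∀ x, a < sqDist c x → sqDist c x < b → ContDiffAt ℝ 2 u x)
    (hΔ : ∀ x, a < sqDist c x → sqDist c x < b → laplacian2 u x ≤ 0) :
    ∃ y, (sqDist c y = a ∨ sqDist c y = b) ∧
      IsMinOn u {y | a ≤ sqDist c y ∧ sqDist c y ≤ b} y := by
  have hQ := continuous_sqDist c
  have hopen : IsOpen {y | a < sqDist c y ∧ sqDist c y < b} :=
    (isOpen_lt continuous_const hQ).inter (isOpen_lt hQ continuous_const)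
  have hKF : {y | a ≤ sqDist c y ∧ sqDist c y ≤ b} \ {y | sqDist c y = a ∨ sqDist c y = b} ⊆
      {y | a < sqDist c y ∧ sqDist c y < b} := fun y ⟨⟨hay, hyb⟩, hyF⟩ =>
    ⟨hay.lt_of_ne fun h => hyF (Or.inl h.symm), hyb.lt_of_ne fun h => hyF (Or.inr h)⟩
  refine exists_isMinOn_of_laplacian2_nonpos
    ((isCompact_sqDist_le c b).of_isClosed_subset
      ((isClosed_le continuous_const hQ).inter (isClosed_le hQ continuous_const)) fun y hy => hy.2)
    ((isClosed_eq hQ continuous_const).union (isClosed_eq hQ continuous_const))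
    (fun y hy => ?_) ((exists_sqDist_eq c ha).imp fun y hy => Or.inl hy)
    (hKF.trans (interior_maximal (fun y hy => ⟨hy.1.le, hy.2.le⟩) hopen)) hu
    (fun x hx => hu₂ x (hKF hx).1 (hKF hx).2) (fun x hx => hΔ x (hKF hx).1 (hKF hx).2)
  rcases hy with hy | hy <;> rw [mem_ofPred_eq, hy]
  exacts [⟨le_rfl, hab⟩, ⟨hab, le_rfl⟩]

section Liouville

variable {u : (Fin 2 → ℝ) → ℝ}

theorem exists_sqDist_eq_add_mul_log_le (hu : ContDiff ℝ 2 u) {m : ℝ} (hm : ∀ x, m ≤ u x)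
    (hΔ : ∀ x, laplacian2 u x ≤ 0) {c z : Fin 2 → ℝ} {a ε : ℝ} (ha : 0 < a)
    (haz : a ≤ sqDist c z) (hε : 0 < ε) :
    ∃ y, sqDist c y = a ∧ u y + ε * log a ≤ u z + ε * log (sqDist c z) := by
  -- on the outer circle `sqDist c = b` the logarithm alone exceeds `u z + ε log (sqDist c z)`
  set b := sqDist c z * exp ((u z - m) / ε + 1)
  have hlogb : log b = log (sqDist c z) + (u z - m) / ε + 1 := by
    rw [Real.log_mul (ha.trans_le haz).ne' (exp_pos _).ne', Real.log_exp]; ring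
  have hzb : sqDist c z ≤ b := le_mul_of_one_le_right (ha.trans_le haz).le
    (one_le_exp (by have := hm z; positivity))
  have hlog : ∀ x, a ≤ sqDist c x → ContDiffAt ℝ 2 (fun y => ε * log (sqDist c y)) x :=
    fun x hx => contDiffAt_const.mul ((contDiff_sqDist c).contDiffAt.log (ha.trans_le hx).ne')
  obtain ⟨p, hpF, hpmin⟩ := exists_isMinOn_annulus_of_laplacian2_nonpos ha.le (haz.trans hzb)
    (u := fun y => u y + ε * log (sqDist c y))
    (hu.continuous.continuousOn.add (continuousOn_const.mul
      ((continuous_sqDist c).continuousOn.log fun x hx => (ha.trans_le hx.1).ne')))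
    (fun x hx _ => hu.contDiffAt.add (hlog x hx.le))
    (fun x hx _ => by
      rw [laplacian2_add hu.contDiffAt (hlog x hx.le),
        laplacian2_mul_log_sqDist ε (ha.trans hx).ne', add_zero]
      exact hΔ x)
  have hpz := isMinOn_iff.mp hpmin z ⟨haz, hzb⟩
  rcases hpF with hpa | hpb
  · exact ⟨p, hpa, by rwa [hpa] at hpz⟩
  · rw [hpb, hlogb, mul_add, mul_add, mul_div_cancel₀ _ hε.ne'] at hpz
    linarith [hm p]

theorem exists_sqDist_eq_le_of_laplacian2_nonpos (hu : ContDiff ℝ 2 u) {m : ℝ}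
    (hm : ∀ x, m ≤ u x) (hΔ : ∀ x, laplacian2 u x ≤ 0) {c z : Fin 2 → ℝ} {a : ℝ} (ha : 0 < a)
    (haz : a ≤ sqDist c z) : ∃ y, sqDist c y = a ∧ u y ≤ u z := by
  obtain ⟨y, hy, hymin⟩ := ((isCompact_sqDist_le c a).of_isClosed_subset
      (isClosed_eq (continuous_sqDist c) continuous_const) fun y hy => hy.le).exists_isMinOn
    (exists_sqDist_eq c ha.le) hu.continuous.continuousOn
  refine ⟨y, hy, le_of_forall_pos_le_add fun δ hδ => ?_⟩
  set D := log (sqDist c z) - log a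
  have hD : 0 ≤ D := sub_nonneg.mpr (Real.log_le_log ha haz)
  obtain ⟨y', hy', hle⟩ := exists_sqDist_eq_add_mul_log_le hu hm hΔ ha haz
    (div_pos hδ (by linarith : 0 < D + 1))
  have hδD : δ / (D + 1) * D ≤ δ := by
    rw [div_mul_eq_mul_div, div_le_iff₀ (by linarith)]
    nlinarith
  have := isMinOn_iff.mp hymin y' hy'
  nlinarith

theorem eq_of_laplacian2_nonpos_of_bddBelow (hu : ContDiff ℝ 2 u)
    (hbdd : BddBelow (range u)) (hΔ : ∀ x, laplacian2 u x ≤ 0) (x y : Fin 2 → ℝ) :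
    u x = u y := by
  obtain ⟨m, hm⟩ := hbdd
  replace hm : ∀ x, m ≤ u x := fun x => hm ⟨x, rfl⟩
  suffices h : ∀ c z, u c ≤ u z from le_antisymm (h x y) (h y x)
  intro c z
  rcases eq_or_ne z c with rfl | hzc
  · rfl
  have hz : 0 < sqDist c z :=
    Real.sqrt_pos.mp ((dist_pos.mpr hzc).trans_le (dist_le_sqrt_sqDist c z))
  refine le_of_forall_pos_lt_add fun η hη => ?_
  obtain ⟨δ, hδ, hcont⟩ := Metric.continuousAt_iff.mp (hu.continuous.continuousAt (x := c)) η hη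
  obtain ⟨y, hy, hyz⟩ := exists_sqDist_eq_le_of_laplacian2_nonpos hu hm hΔ
    (a := min (sqDist c z) ((δ / 2) ^ 2)) (lt_min hz (by positivity)) (min_le_left _ _)
  have hyc : dist y c < δ :=
    calc dist y c ≤ √(sqDist c y) := dist_le_sqrt_sqDist c y
      _ ≤ √((δ / 2) ^ 2) := Real.sqrt_le_sqrt (hy ▸ min_le_right _ _)
      _ = δ / 2 := Real.sqrt_sq (by positivity)
      _ < δ := by linarith
  have := hcont hyc
  rw [Real.dist_eq, abs_lt] at this
  linarith

end Liouville

theorem superharmonic_dichotomy_general (w V : (Fin 2 → ℝ) → ℝ)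
    (hw : ContDiff ℝ 2 w)
    (hwpos : ∀ x, 0 < w x) (hwle : ∀ x, w x ≤ 1)
    (hV0 : ∀ x, 0 ≤ V x)
    (hpde : ∀ x, (1 / 2 : ℝ) * laplacian2 w x = V x * ((w x) ^ 2 - w x))
    (hVnz : (∀ x, w x < 1) → ∃ x, x ∈ {y | w y < 1} ∧ V x ≠ 0) :
    ∀ x, w x = 1 := by
  have hΔ : ∀ x, laplacian2 w x ≤ 0 := fun x => by
    nlinarith [hpde x, mul_nonneg (hV0 x) (mul_nonneg (hwpos x).le (sub_nonneg.mpr (hwle x)))]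
  have hconst := eq_of_laplacian2_nonpos_of_bddBelow hw ⟨0, by
    rintro _ ⟨x, rfl⟩; exact (hwpos x).le⟩ hΔ
  by_contra! ⟨x, hx⟩
  have hlt : ∀ y, w y < 1 := fun y => hconst y x ▸ (hwle x).lt_of_ne hx
  obtain ⟨x', -, hVx'⟩ := hVnz hlt
  have hΔx' : laplacian2 w x' = 0 := by
    rw [show w = fun _ => w x' from funext fun y => hconst y x']
    simp [laplacian2]
  have : w x' ^ 2 - w x' = 0 := by
    simpa [hΔx', hVx'] using (hpde x').symm
  nlinarith [hwpos x', hlt x']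

/-- Let `w` be a `C²` function on `ℝ²` with `0 < w ≤ 1` satisfying
`(1/2)Δw = V(w² - w)`, where `V ≥ 0` is bounded and not identically zero on the
region where `w < 1`.  If `w < 1` everywhere, then `w` would be a nonconstant
bounded superharmonic function on `ℝ²`, contradicting the recurrence of planar
Brownian motion (bounded superharmonic functions on `ℝ²` are constant); hence
`w ≡ 1`. -/
theorem superharmonic_dichotomy (w V : (Fin 2 → ℝ) → ℝ)
    (hw : ContDiff ℝ 2 w)
    (hwpos : ∀ x, 0 < w x) (hwle : ∀ x, w x ≤ 1)
    (hV0 : ∀ x, 0 ≤ V x) (hVbd : ∃ M : ℝ, ∀ x, V x ≤ M)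
    (hpde : ∀ x, (1 / 2 : ℝ) * laplacian2 w x = V x * ((w x) ^ 2 - w x))
    (hVnz : (∀ x, w x < 1) → ∃ x, x ∈ {y | w y < 1} ∧ V x ≠ 0) :
    ∀ x, w x = 1 :=
  superharmonic_dichotomy_general w V hw hwpos hwle hV0 hpde hVnz
end
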